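/- arXiv:2103.03669 — 3 statements merged into one kernel-verified Lean document; each statement's English description precedes it below -/
import Mathlib

section
/- Let M ∈ D_n, the subgroup of Sp(2n, F_2) consisting of matrices mapping the base B onto itself. Write M = [[A, B'],[C, D]] in n×n blocks. Then B'_{ij} = 0 whenever (i,j) ≠ (1,1), and D_{1j} = 0 for j = 2,...,n. -/
open Matrix

def Omega (n : ℕ) : Matrix (Fin n ⊕ Fin n) (Fin n ⊕ Fin n) (ZMod 2) :=
  Matrix.fromBlocks 0 1 1 0

def base (n : ℕ) (hn : 0 < n) : Set (Fin n ⊕ Fin n → ZMod 2) :=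
  {v | (∀ i : Fin n, v (Sum.inl i) = 0) ∧ v (Sum.inr ⟨0, hn⟩) = 0}

lemma key_lemma (n : ℕ) (hn : 0 < n)
    (A B' C D : Matrix (Fin n) (Fin n) (ZMod 2))
    (hb : (Matrix.fromBlocks A B' C D).mulVec '' base n hn ⊆ base n hn) :
    ∀ j : Fin n, j ≠ ⟨0, hn⟩ → (∀ i, B' i j = 0) ∧ D ⟨0, hn⟩ j = 0 := by
  intro j hj
  set v : Fin n ⊕ Fin n → ZMod 2 := Pi.single (Sum.inr j) 1 with hv
  have hvmem : v ∈ base n hn := by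
    refine ⟨fun i => Pi.single_eq_of_ne (by simp) 1, ?_⟩
    exact Pi.single_eq_of_ne (by simpa using fun h => hj h.symm) 1
  have himg : (Matrix.fromBlocks A B' C D).mulVec v ∈ base n hn :=
    hb ⟨v, hvmem, rfl⟩
  obtain ⟨h1, h2⟩ := himg
  constructor
  · intro i
    have := h1 i
    simpa [hv, Matrix.mulVec_single] using this
  · simpa [hv, Matrix.mulVec_single] using h2

theorem distillation_subgroup_block_structure (n : ℕ) (hn : 0 < n)
    (A B' C D : Matrix (Fin n) (Fin n) (ZMod 2))
    (hSp : (Matrix.fromBlocks A B' C D)ᵀ * Omega n * Matrix.fromBlocks A B' C D = Omega n)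
    (hbase : (Matrix.fromBlocks A B' C D).mulVec '' base n hn = base n hn) :
    (∀ i j : Fin n, (i, j) ≠ (⟨0, hn⟩, ⟨0, hn⟩) → B' i j = 0) ∧
      (∀ j : Fin n, j ≠ ⟨0, hn⟩ → D ⟨0, hn⟩ j = 0) := by
  set M := Matrix.fromBlocks A B' C D with hM
  set N := Matrix.fromBlocks Dᵀ B'ᵀ Cᵀ Aᵀ with hN
  have hNM : N * M = 1 := by
    have hNform : N = Omega n * Mᵀ * Omega n := by
      rw [hN, hM, Omega, Matrix.fromBlocks_transpose]
      simp [Matrix.fromBlocks_multiply]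
    have hOO : Omega n * Omega n = 1 := by
      rw [Omega]
      simp [Matrix.fromBlocks_multiply, ← Matrix.fromBlocks_one]
    calc N * M = Omega n * (Mᵀ * Omega n * M) := by
          rw [hNform, mul_assoc, mul_assoc, mul_assoc]
      _ = 1 := by rw [hSp, hOO]
  have hNbase : N.mulVec '' base n hn ⊆ base n hn := by
    rintro _ ⟨w, hw, rfl⟩
    rw [← hbase] at hw
    obtain ⟨u, hu, rfl⟩ := hw
    have huN : N.mulVec (M.mulVec u) = u := by
      rw [Matrix.mulVec_mulVec, hNM, Matrix.one_mulVec]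
    rwa [huN]
  have h1 := key_lemma n hn A B' C D (hbase.le)
  have h2 := key_lemma n hn Dᵀ B'ᵀ Cᵀ Aᵀ hNbase
  constructor
  · intro i j hij
    by_cases hj : j = ⟨0, hn⟩
    · subst hj
      have hi : i ≠ ⟨0, hn⟩ := fun h => hij (by rw [h])
      have := (h2 i hi).1 ⟨0, hn⟩
      simpa using this
    · exact (h1 j hj).1 i
  · intro j hj
    exact (h1 j hj).2
end

section
/- The order of the symplectic group Sp(2n, F_2) equals 2^{n^2} · ∏_{j=1}^n (4^j − 1). -/
/-!
Over `𝔽₂` the symmetric form `⟨v, w⟩ = vᵀ Ω w` is alternating, and `Mᵀ Ω M = Ω` says exactly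
that the columns `(e₁, …, eₙ, f₁, …, fₙ)` of `M` form a symplectic basis for it. So it suffices to
count symplectic bases of a `2n`-dimensional symplectic space over a field with `q` elements,
choosing one pair `(eₖ, fₖ)` at a time.
Once `k` pairs are chosen, their pairings `v ↦ (⟨eᵢ, v⟩, ⟨fᵢ, v⟩)ᵢ` form a surjective linear map
onto `𝔽_q^{2k}`, so the vectors orthogonal to all of them form a subspace with `q^{2(n-k)}` elements.
The next `eₖ₊₁` is any nonzero vector of it, and the next `fₖ₊₁` is a solution of one more
independent linear equation `⟨eₖ₊₁, f⟩ = 1` in it, giving `(q^{2(n-k)} - 1) q^{2(n-k)-1}` choices.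
Since the exponents `2j - 1` sum to `n²`, the product is `q^{n²} ∏ (q^{2j} - 1)`.
-/

open Matrix

open Finset

theorem Nat.card_subtype_prod_of_card_fiber {α β : Type*} [Finite α] [Finite β] (p : α → Prop)
    (r : α → β → Prop) {c : ℕ} (hc : ∀ a, p a → Nat.card {b // r a b} = c) :
    Nat.card {x : α × β // p x.1 ∧ r x.1 x.2} = Nat.card {a // p a} * c := by
  have : Fintype {a // p a} := Fintype.ofFinite _
  let e : {x : α × β // p x.1 ∧ r x.1 x.2} ≃ Σ a : {a // p a}, {b // r a b} :=
    { toFun := fun x => ⟨⟨x.1.1, x.2.1⟩, x.1.2, x.2.2⟩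
      invFun := fun y => ⟨(y.1.1, y.2.1), y.1.2, y.2.2⟩ }
  rw [Nat.card_congr e, Nat.card_sigma, sum_congr rfl fun a _ => hc a.1 a.2, sum_const,
    Finset.card_univ, smul_eq_mul, Nat.card_eq_fintype_card]

theorem AddMonoidHom.card_fiber_mul_card_of_surjective {A W : Type*} [AddGroup A] [AddGroup W]
    [Finite A] {φ : A →+ W} (hφ : Function.Surjective φ) (t : W) :
    Nat.card (φ ⁻¹' {t}) * Nat.card W = Nat.card A := by
  rw [Nat.card_congr (φ.fiberEquivKerOfSurjective hφ t), ← φ.ker.card_mul_index,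
    AddSubgroup.index_ker φ, φ.range_eq_top.2 hφ, AddSubgroup.card_top]

theorem Nat.sum_Icc_two_mul_sub_one (n : ℕ) : ∑ j ∈ Icc 1 n, (2 * j - 1) = n ^ 2 := by
  induction n with
  | zero => simp
  | succ n ih =>
    rw [sum_Icc_succ_top (by omega), ih]
    ring_nf
    omega

namespace LinearMap.BilinForm

variable {K V : Type*} [Field K] [AddCommGroup V] [Module K V] (B : LinearMap.BilinForm K V)

def IsSymplecticFamily {m : ℕ} (g : Fin m → V × V) : Prop :=
  ∀ i j, B (g i).1 (g j).1 = 0 ∧ B (g i).2 (g j).2 = 0 ∧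
    B (g i).1 (g j).2 = if i = j then 1 else 0

def pairing {m : ℕ} (g : Fin m → V × V) : V →ₗ[K] (Fin m → K) × (Fin m → K) :=
  (LinearMap.pi fun i => B (g i).1).prod (LinearMap.pi fun i => B (g i).2)

/-- A preimage of `t` under `B.pairing g` lying in the span of `g`. -/
def symplecticCombination {m : ℕ} (g : Fin m → V × V) (t : (Fin m → K) × (Fin m → K)) : V :=
  ∑ i, t.1 i • (g i).2 - ∑ i, t.2 i • (g i).1

variable {B} {m : ℕ} {g : Fin m → V × V}

lemma mem_ker_pairing {v : V} :
    v ∈ LinearMap.ker (B.pairing g) ↔ ∀ i, B (g i).1 v = 0 ∧ B (g i).2 v = 0 := by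
  simp [pairing, funext_iff, forall_and]

lemma pairing_symplecticCombination (hB : B.IsAlt) (hg : B.IsSymplecticFamily g)
    (t : (Fin m → K) × (Fin m → K)) : B.pairing g (symplecticCombination g t) = t := by
  ext i
  · simp [pairing, symplecticCombination, (hg _ _).1, (hg _ _).2.2]
  · have h : ∀ j, B (g i).2 (g j).1 = -if j = i then 1 else 0 := fun j => by
      rw [← hB.neg_eq (g j).1 (g i).2, (hg j i).2.2]
    simp [pairing, symplecticCombination, (hg _ _).2.1, h]

lemma apply_symplecticCombination_eq_zero (hB : B.IsAlt) {e : V}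
    (he : e ∈ LinearMap.ker (B.pairing g)) (t : (Fin m → K) × (Fin m → K)) :
    B e (symplecticCombination g t) = 0 := by
  rw [mem_ker_pairing] at he
  simp [symplecticCombination, hB.eq_iff.1 (he _).1, hB.eq_iff.1 (he _).2]

lemma pairing_surjective (hB : B.IsAlt) (hg : B.IsSymplecticFamily g) :
    Function.Surjective (B.pairing g) :=
  fun t => ⟨_, pairing_symplecticCombination hB hg t⟩

lemma pairing_prod_surjective (hB : B.IsAlt) (hnd : B.SeparatingLeft)
    (hg : B.IsSymplecticFamily g) {e : V} (he : e ∈ LinearMap.ker (B.pairing g)) (he0 : e ≠ 0) :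
    Function.Surjective ((B.pairing g).prod (B e)) := by
  obtain ⟨u, hu⟩ : ∃ u, B e u ≠ 0 := by
    by_contra! h
    exact he0 (hnd e h)
  set u' := (B e u)⁻¹ • u
  -- `w` spans the complement of `ker (B e)` inside `ker (pairing B g)`.
  set w := u' - symplecticCombination g (B.pairing g u')
  have hw : B.pairing g w = 0 := by simp [w, pairing_symplecticCombination hB hg]
  have hew : B e w = 1 := by simp [w, u', apply_symplecticCombination_eq_zero hB he, hu]
  rintro ⟨t, c⟩
  refine ⟨symplecticCombination g t + c • w, ?_⟩
  simp [pairing_symplecticCombination hB hg, apply_symplecticCombination_eq_zero hB he, hw, hew]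

lemma isSymplecticFamily_snoc (hB : B.IsAlt) {p : V × V} :
    B.IsSymplecticFamily (Fin.snoc g p : Fin (m + 1) → V × V) ↔
      B.IsSymplecticFamily g ∧ p.1 ∈ LinearMap.ker (B.pairing g) ∧
        p.2 ∈ LinearMap.ker (B.pairing g) ∧ B p.1 p.2 = 1 := by
  simp only [IsSymplecticFamily, Fin.forall_fin_succ', Fin.snoc_castSucc, Fin.snoc_last,
    mem_ker_pairing, Fin.castSucc_inj, Fin.castSucc_ne_last, (Fin.castSucc_ne_last _).symm,
    hB.self_eq_zero, if_true, if_false, hB.eq_iff (x := p.1), hB.eq_iff (x := p.2), forall_and]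
  tauto

variable [Finite K] [Finite V] {n : ℕ}

lemma card_ker_pairing (hB : B.IsAlt) (hg : B.IsSymplecticFamily g)
    (hV : Module.finrank K V = 2 * n) (hm : m ≤ n) :
    Nat.card (LinearMap.ker (B.pairing g)) = Nat.card K ^ (2 * (n - m)) := by
  have h := (B.pairing g).toAddMonoidHom.card_fiber_mul_card_of_surjective
    (pairing_surjective hB hg) 0
  rw [Module.natCard_eq_pow_finrank (K := K) (V := V), hV] at h
  simp only [Nat.card_prod, Nat.card_fun, Nat.card_eq_fintype_card (α := Fin m),
    Fintype.card_fin] at h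
  refine Nat.eq_of_mul_eq_mul_right (pow_pos (Nat.card_pos (α := K)) (2 * m)) ?_
  rw [← pow_add, show 2 * (n - m) + 2 * m = 2 * n by omega, ← h, two_mul m, pow_add]
  rfl

lemma card_partners (hB : B.IsAlt) (hnd : B.SeparatingLeft) (hg : B.IsSymplecticFamily g)
    (hV : Module.finrank K V = 2 * n) (hm : m < n)
    {e : V} (he : e ∈ LinearMap.ker (B.pairing g)) (he0 : e ≠ 0) :
    Nat.card {f // f ∈ LinearMap.ker (B.pairing g) ∧ B e f = 1} =
      Nat.card K ^ (2 * (n - m) - 1) := by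
  have h := ((B.pairing g).prod (B e)).toAddMonoidHom.card_fiber_mul_card_of_surjective
    (pairing_prod_surjective hB hnd hg he he0) (0, 1)
  rw [Module.natCard_eq_pow_finrank (K := K) (V := V), hV] at h
  simp only [Nat.card_prod, Nat.card_fun, Nat.card_eq_fintype_card (α := Fin m),
    Fintype.card_fin] at h
  refine Nat.eq_of_mul_eq_mul_right (pow_pos (Nat.card_pos (α := K)) (2 * m + 1)) ?_
  rw [← pow_add, show 2 * (n - m) - 1 + (2 * m + 1) = 2 * n by omega, ← h, pow_succ, two_mul m,
    pow_add]
  congr 1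
  exact Nat.card_congr (Equiv.subtypeEquivRight fun f => by simp [Prod.ext_iff])

lemma card_extensions (hB : B.IsAlt) (hnd : B.SeparatingLeft) (hg : B.IsSymplecticFamily g)
    (hV : Module.finrank K V = 2 * n) (hm : m < n) :
    Nat.card {p : V × V // p.1 ∈ LinearMap.ker (B.pairing g) ∧
        p.2 ∈ LinearMap.ker (B.pairing g) ∧ B p.1 p.2 = 1} =
      (Nat.card K ^ (2 * (n - m)) - 1) * Nat.card K ^ (2 * (n - m) - 1) := by
  set W := LinearMap.ker (B.pairing g)
  have hnonzero : ∀ p : V × V, p.1 ∈ W ∧ p.2 ∈ W ∧ B p.1 p.2 = 1 ↔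
      (p.1 ∈ W ∧ p.1 ≠ 0) ∧ (p.2 ∈ W ∧ B p.1 p.2 = 1) := fun p =>
    ⟨fun ⟨h1, h2, h3⟩ => ⟨⟨h1, by rintro h0; simp [h0] at h3⟩, h2, h3⟩,
      fun ⟨⟨h1, _⟩, h2, h3⟩ => ⟨h1, h2, h3⟩⟩
  rw [Nat.card_congr (Equiv.subtypeEquivRight hnonzero),
    Nat.card_subtype_prod_of_card_fiber (fun e => e ∈ W ∧ e ≠ 0) (fun e f => f ∈ W ∧ B e f = 1)
      fun e he => card_partners hB hnd hg hV hm he.1 he.2]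
  congr 1
  change Nat.card ↥((W : Set V) \ {0}) = _
  rw [Nat.card_coe_set_eq, Set.ncard_sdiff_singleton_of_mem W.zero_mem, ← Nat.card_coe_set_eq,
    SetLike.coe_sort_coe, card_ker_pairing hB hg hV hm.le]

theorem card_isSymplecticFamily (hB : B.IsAlt) (hnd : B.SeparatingLeft)
    (hV : Module.finrank K V = 2 * n) (hm : m ≤ n) :
    Nat.card {g : Fin m → V × V // B.IsSymplecticFamily g} =
      ∏ j ∈ Icc (n - m + 1) n, (Nat.card K ^ (2 * j) - 1) * Nat.card K ^ (2 * j - 1) := by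
  induction m with
  | zero =>
    rw [Nat.sub_zero, Icc_eq_empty (by omega), prod_empty, Nat.card_eq_one_iff_unique]
    exact ⟨⟨fun g g' => Subtype.ext (Subsingleton.elim _ _)⟩, ⟨⟨finZeroElim, finZeroElim⟩⟩⟩
  | succ m ih =>
    let snoc : (Fin m → V × V) × (V × V) ≃ (Fin (m + 1) → V × V) :=
      { toFun := fun x => Fin.snoc x.1 x.2
        invFun := fun g => (Fin.init g, g (Fin.last m))
        left_inv := fun x => by simp
        right_inv := Fin.snoc_init_self }
    have hext := fun (g : Fin m → V × V) (hg : B.IsSymplecticFamily g) =>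
      card_extensions hB hnd hg hV hm
    rw [← Nat.card_congr (snoc.subtypeEquiv fun x => (isSymplecticFamily_snoc hB).symm),
      Nat.card_subtype_prod_of_card_fiber _ _ hext, ih (by omega),
      ← insert_Icc_add_one_left_eq_Icc (by omega : n - (m + 1) + 1 ≤ n),
      prod_insert (by simp), mul_comm, show n - (m + 1) + 1 = n - m by omega]

theorem card_isSymplecticFamily_of_finrank_eq (hB : B.IsAlt) (hnd : B.SeparatingLeft)
    (hV : Module.finrank K V = 2 * n) :
    Nat.card {g : Fin n → V × V // B.IsSymplecticFamily g} =
      Nat.card K ^ (n ^ 2) * ∏ j ∈ Icc 1 n, (Nat.card K ^ (2 * j) - 1) := by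
  rw [card_isSymplecticFamily hB hnd hV le_rfl, Nat.sub_self, prod_mul_distrib,
    prod_pow_eq_pow_sum, Nat.sum_Icc_two_mul_sub_one, mul_comm]

end LinearMap.BilinForm

theorem Matrix.transpose_mul_mul_apply_eq_toBilin' {ι R : Type*} [Fintype ι] [DecidableEq ι]
    [CommRing R] (A M : Matrix ι ι R) (k l : ι) :
    (Mᵀ * A * M) k l = Matrix.toBilin' A (Mᵀ k) (Mᵀ l) := by
  simp only [toBilin'_apply, mul_apply, transpose_apply, sum_mul]
  exact sum_comm

@[simps]
def Matrix.columnPairs {ι R : Type*} {n : ℕ} :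
    Matrix ι (Fin n ⊕ Fin n) R ≃ (Fin n → (ι → R) × (ι → R)) where
  toFun M i := (Mᵀ (.inl i), Mᵀ (.inr i))
  invFun g := Matrix.of fun k => Sum.elim (fun i => (g i).1 k) (fun i => (g i).2 k)
  left_inv M := by ext k l; cases l <;> rfl
  right_inv g := rfl

theorem Omega_mul_self (n : ℕ) : Omega n * Omega n = 1 := by
  simp [Omega, fromBlocks_multiply]

theorem isAlt_toBilin'_Omega (n : ℕ) : (Matrix.toBilin' (Omega n)).IsAlt := by
  intro v
  simp [toBilin'_apply', Omega, fromBlocks_mulVec, dotProduct, Fintype.sum_sum_type, mul_comm]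
  exact CharTwo.add_self_eq_zero _

theorem separatingLeft_toBilin'_Omega (n : ℕ) : (Matrix.toBilin' (Omega n)).SeparatingLeft := by
  refine Matrix.separatingLeft_toBilin'_iff.2 (nondegenerate_of_det_ne_zero ?_).separatingLeft
  have h := congrArg Matrix.det (Omega_mul_self n)
  rw [det_mul, det_one] at h
  exact left_ne_zero_of_mul_eq_one h

theorem transpose_mul_Omega_mul_eq_Omega_iff {n : ℕ}
    (M : Matrix (Fin n ⊕ Fin n) (Fin n ⊕ Fin n) (ZMod 2)) :
    Mᵀ * Omega n * M = Omega n ↔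
      (Matrix.toBilin' (Omega n)).IsSymplecticFamily (columnPairs M) := by
  have hsymm : ∀ v w, toBilin' (Omega n) v w = toBilin' (Omega n) w v := fun v w => by
    rw [← (isAlt_toBilin'_Omega n).neg_eq, ZMod.neg_eq_self_mod_two]
  simp only [← Matrix.ext_iff, transpose_mul_mul_apply_eq_toBilin', Sum.forall,
    LinearMap.BilinForm.IsSymplecticFamily, columnPairs_apply]
  generalize toBilin' (Omega n) = B at hsymm ⊢
  have hswap : ∀ i j, B (Mᵀ (.inr i)) (Mᵀ (.inl j)) = B (Mᵀ (.inl j)) (Mᵀ (.inr i)) :=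
    fun _ _ => hsymm _ _
  simp only [Omega, fromBlocks_apply₁₁, fromBlocks_apply₁₂, fromBlocks_apply₂₁,
    fromBlocks_apply₂₂, one_apply, Matrix.zero_apply, hswap, forall_and]
  constructor
  · rintro ⟨⟨h11, h12⟩, -, h22⟩
    exact ⟨h11, h22, h12⟩
  · rintro ⟨h11, h22, h12⟩
    exact ⟨⟨h11, h12⟩, fun i j => by simp [h12, eq_comm], h22⟩

theorem card_symplectic_group (n : ℕ) :
    Nat.card {M : Matrix (Fin n ⊕ Fin n) (Fin n ⊕ Fin n) (ZMod 2) //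
        Mᵀ * Omega n * M = Omega n} =
      2 ^ (n ^ 2) * ∏ j ∈ Finset.Icc 1 n, (4 ^ j - 1) := by
  have hV : Module.finrank (ZMod 2) (Fin n ⊕ Fin n → ZMod 2) = 2 * n := by
    simp [Module.finrank_fintype_fun_eq_card, two_mul]
  rw [Nat.card_congr (columnPairs.subtypeEquiv transpose_mul_Omega_mul_eq_Omega_iff),
    LinearMap.BilinForm.card_isSymplecticFamily_of_finrank_eq (isAlt_toBilin'_Omega n)
      (separatingLeft_toBilin'_Omega n) hV, Nat.card_zmod]
  simp only [pow_mul]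
  norm_num
end

section
/- The subgroup of D_n fixing both e_n and e_{2n} has index 2^{2n−1}(2^{n−1} − 1) in D_n, for n > 1. Equivalently: the orbit of the pair (e_{2n}, e_n) under D_n has size (2^{n−1} − 1)·2^{2n−1}, consisting of all pairs (v, w) with v a nonzero base vector and w ∈ F_2^{2n} with ω(w, v) = 1. -/
/-!
Elements of `Dₙ` preserve `ω` and `B`, and `ω(e_n, e_{2n}) = 1`, so every pair in the orbit has
the stated form. Conversely, `Dₙ` contains every block matrix `[[A, 0], [C, D]]` with `AᵀD = 1`,
`CᵀA + AᵀC = 0` and `D` fixing the coordinate `n + 1`. Block transvections `D = 1 + a bᵀ`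
(`b ⬝ a = 0`) move `e_{2n}` to any nonzero `v ∈ B`; pulling `w` back along such a matrix reduces
to the case `v = e_{2n}`, where a transvection followed by a shear `[[1, 0], [S, 1]]` with `S`
symmetric moves `e_n` to any `w` with `ω(w, e_{2n}) = 1` and fixes `e_{2n}`. Finally `B` has
`2^{n-1}` elements, and for `v ≠ 0` the affine hyperplane `ω(·, v) = 1` has `2^{2n-1}`.
-/

open Matrix

def symplForm (n : ℕ) (v w : Fin n ⊕ Fin n → ZMod 2) : ZMod 2 :=
  dotProduct v ((Omega n).mulVec w)

/-- The orbit of the pair `(e_{2n}, e_n)` under the distillation subgroup `Dₙ`. -/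
def pairOrbit (n : ℕ) (hn : 1 < n) :
    Set ((Fin n ⊕ Fin n → ZMod 2) × (Fin n ⊕ Fin n → ZMod 2)) :=
  {p | ∃ M : Matrix (Fin n ⊕ Fin n) (Fin n ⊕ Fin n) (ZMod 2),
    Mᵀ * Omega n * M = Omega n ∧
    M.mulVec '' base n (by omega) = base n (by omega) ∧
    M.mulVec (Pi.single (Sum.inr ⟨n - 1, by omega⟩) 1) = p.1 ∧
    M.mulVec (Pi.single (Sum.inl ⟨n - 1, by omega⟩) 1) = p.2}

lemma AddMonoidHom.card_preimage_singleton_mul_card {G H : Type*} [AddGroup G] [AddGroup H]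
    {f : G →+ H} (hf : Function.Surjective f) (h : H) :
    Nat.card (f ⁻¹' {h}) * Nat.card H = Nat.card G := by
  rw [Nat.card_congr (f.fiberEquivKerOfSurjective hf h), ← f.ker.card_mul_index,
    AddSubgroup.index_ker, AddMonoidHom.range_eq_top.mpr hf, AddSubgroup.card_top]

lemma Nat.card_subtype_prod_eq_mul {α β : Type*} [Finite α] [Finite β] {P : α → Prop}
    {Q : α → β → Prop} {k : ℕ} (hQ : ∀ a, P a → Nat.card {b // Q a b} = k) :
    Nat.card {c : α × β // P c.1 ∧ Q c.1 c.2} = Nat.card {a // P a} * k := by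
  classical
  cases nonempty_fintype α
  let e : {c : α × β // P c.1 ∧ Q c.1 c.2} ≃ Σ a : {a // P a}, {b // Q a b} :=
    { toFun := fun c => ⟨⟨c.1.1, c.2.1⟩, ⟨c.1.2, c.2.2⟩⟩
      invFun := fun s => ⟨(s.1.1, s.2.1), s.1.2, s.2.2⟩
      left_inv := fun _ => rfl
      right_inv := fun _ => rfl }
  rw [Nat.card_congr e, Nat.card_sigma, Finset.sum_congr rfl fun a _ => hQ a.1 a.2,
    Finset.sum_const, Finset.card_univ, smul_eq_mul, Nat.card_eq_fintype_card]

lemma card_dotProduct_eq_mul_card {ι K : Type*} [Fintype ι] [Field K] {u : ι → K}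
    (hu : u ≠ 0) (c : K) :
    Nat.card {w : ι → K // w ⬝ᵥ u = c} * Nat.card K = Nat.card K ^ Nat.card ι := by
  classical
  let f : (ι → K) →+ K :=
    { toFun := (· ⬝ᵥ u)
      map_zero' := zero_dotProduct u
      map_add' := fun a b => add_dotProduct a b u }
  obtain ⟨i, hi⟩ := Function.ne_iff.mp hu
  have hf : Function.Surjective f := fun c =>
    ⟨Pi.single i (c / u i), by simp [f, div_mul_cancel₀ c hi]⟩
  exact (f.card_preimage_singleton_mul_card hf c).trans Nat.card_fun

lemma exists_dotProduct_eq_one {ι : Type*} [Fintype ι] [DecidableEq ι] {y : ι → ZMod 2}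
    (hy : y ≠ 0) (m : ι) : ∃ u : ι → ZMod 2, u m = 1 ∧ u ⬝ᵥ y = 1 := by
  obtain ⟨k, hk⟩ := Function.ne_iff.mp hy
  replace hk : y k = 1 := Fin.eq_one_of_ne_zero _ hk
  by_cases hym : y m = 1
  · exact ⟨Pi.single m 1, by simp, by simp [hym]⟩
  · have hkm : k ≠ m := by rintro rfl; exact hym hk
    replace hym : y m = 0 := by_contra fun h => hym (Fin.eq_one_of_ne_zero _ h)
    exact ⟨Pi.single m 1 + Pi.single k 1, by simp [hkm], by simp [add_dotProduct, hym, hk]⟩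

section Matrices

variable {ι R : Type*} [Fintype ι] [DecidableEq ι] [CommRing R]

lemma one_add_vecMulVec_mulVec (a b x : ι → R) :
    (1 + vecMulVec a b) *ᵥ x = x + (b ⬝ᵥ x) • a := by
  rw [add_mulVec, one_mulVec, vecMulVec_mulVec, op_smul_eq_smul]

lemma one_sub_vecMulVec_mulVec (a b x : ι → R) :
    (1 - vecMulVec a b) *ᵥ x = x - (b ⬝ᵥ x) • a := by
  rw [sub_mulVec, one_mulVec, vecMulVec_mulVec, op_smul_eq_smul]

lemma exists_isSymm_mulVec_eq {x : ι → R} {m : ι} (hx : x m = 1) (y : ι → R) :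
    ∃ S : Matrix ι ι R, S.IsSymm ∧ S *ᵥ x = y := by
  set e : ι → R := Pi.single m 1
  refine ⟨vecMulVec y e + vecMulVec e y - (y ⬝ᵥ x) • vecMulVec e e, ?_, ?_⟩
  · simp [Matrix.IsSymm, add_comm]
  · simp [e, add_mulVec, sub_mulVec, smul_mulVec, vecMulVec_mulVec, hx]

end Matrices

section Blocks

variable {l m R : Type*} [Fintype l] [Fintype m] [Semiring R]
  {A : Matrix l l R} {C : Matrix m l R} {D : Matrix m m R}

lemma fromBlocks_mulVec_sumElim_zero_left (y : m → R) :
    fromBlocks A 0 C D *ᵥ Sum.elim 0 y = Sum.elim (0 : l → R) (D *ᵥ y) := by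
  simp [fromBlocks_mulVec]

lemma fromBlocks_mulVec_sumElim_zero_right (x : l → R) :
    fromBlocks A 0 C D *ᵥ Sum.elim x 0 = Sum.elim (A *ᵥ x) (C *ᵥ x) := by
  simp [fromBlocks_mulVec]

end Blocks

section Distillation

variable {n : ℕ}

lemma Omega_mulVec (v : Fin n ⊕ Fin n → ZMod 2) : Omega n *ᵥ v = v ∘ Sum.swap := by
  rw [Omega, fromBlocks_mulVec]
  ext (i | i) <;> simp

lemma symplForm_eq_dotProduct (w v : Fin n ⊕ Fin n → ZMod 2) :
    symplForm n w v = w ⬝ᵥ (v ∘ Sum.swap) := by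
  rw [symplForm, Omega_mulVec]

lemma symplForm_single_inr (w : Fin n ⊕ Fin n → ZMod 2) (m : Fin n) :
    symplForm n w (Pi.single (Sum.inr m) 1) = w (Sum.inl m) := by
  have hswap : (Pi.single (Sum.inr m) 1 : Fin n ⊕ Fin n → ZMod 2) ∘ Sum.swap =
      Pi.single (Sum.inl m) 1 := by
    ext (i | i) <;> simp [Pi.single_apply]
  rw [symplForm_eq_dotProduct, hswap, dotProduct_single, mul_one]

lemma symplForm_mulVec_mulVec {M : Matrix (Fin n ⊕ Fin n) (Fin n ⊕ Fin n) (ZMod 2)}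
    (hM : Mᵀ * Omega n * M = Omega n) (x y : Fin n ⊕ Fin n → ZMod 2) :
    symplForm n (M *ᵥ x) (M *ᵥ y) = symplForm n x y := by
  rw [symplForm, symplForm, ← vecMul_transpose M x, ← dotProduct_mulVec, mulVec_mulVec,
    mulVec_mulVec, hM]

lemma mulVec_surjective_of_transpose_mul_Omega_mul
    {M : Matrix (Fin n ⊕ Fin n) (Fin n ⊕ Fin n) (ZMod 2)}
    (hM : Mᵀ * Omega n * M = Omega n) : Function.Surjective M.mulVec := by
  have hΩ : Omega n * Omega n = 1 := by
    simp [Omega, fromBlocks_multiply, ← fromBlocks_one]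
  refine mulVec_surjective_iff_isUnit.mpr (IsUnit.of_mul_eq_one_right (Omega n * Mᵀ * Omega n) ?_)
  rw [show Omega n * Mᵀ * Omega n * M = Omega n * (Mᵀ * Omega n * M) by
    simp only [Matrix.mul_assoc], hM, hΩ]

lemma card_symplForm_eq_one {v : Fin n ⊕ Fin n → ZMod 2} (hv : v ≠ 0) :
    Nat.card {w // symplForm n w v = 1} = 2 ^ (2 * n - 1) := by
  obtain ⟨i, -⟩ := Function.ne_iff.mp hv
  have hn : 0 < n := by cases i with | inl i | inr i => exact i.pos
  have hv' : v ∘ Sum.swap ≠ 0 := fun h => hv (funext fun i => by simpa using congrFun h i.swap)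
  have hcard := card_dotProduct_eq_mul_card hv' 1
  simp only [← symplForm_eq_dotProduct, Nat.card_zmod, Nat.card_sum, Nat.card_fin] at hcard
  have h2 : 2 ^ (n + n) = 2 ^ (2 * n - 1) * 2 := by
    rw [← pow_succ]
    congr 1
    omega
  omega

lemma base_eq_image (hn : 0 < n) :
    base n hn = Sum.elim (0 : Fin n → ZMod 2) '' {y : Fin n → ZMod 2 | y ⟨0, hn⟩ = 0} := by
  ext v
  constructor
  · rintro ⟨hl, hr⟩
    exact ⟨v ∘ Sum.inr, hr, by ext (i | i) <;> simp [hl]⟩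
  · rintro ⟨y, hy, rfl⟩
    exact ⟨fun _ => rfl, hy⟩

lemma card_base (hn : 0 < n) : Nat.card (base n hn) = 2 ^ (n - 1) := by
  let f : (Fin n ⊕ Fin n → ZMod 2) →+ (Fin n → ZMod 2) × ZMod 2 :=
    { toFun := fun v => (v ∘ Sum.inl, v (Sum.inr ⟨0, hn⟩))
      map_zero' := rfl
      map_add' := fun _ _ => rfl }
  have hf : Function.Surjective f := fun p =>
    ⟨Sum.elim p.1 (Pi.single ⟨0, hn⟩ p.2), by simp [f]⟩
  have hbase : base n hn = f ⁻¹' {0} := by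
    ext v
    simp [base, f, Prod.ext_iff, funext_iff]
  have hcard := f.card_preimage_singleton_mul_card hf 0
  rw [← hbase, Nat.card_prod, Nat.card_fun, Nat.card_fun, Nat.card_sum, Nat.card_zmod,
    Nat.card_fin] at hcard
  refine Nat.eq_of_mul_eq_mul_right (by positivity : 0 < 2 ^ n * 2) (hcard.trans ?_)
  rw [← pow_succ, ← pow_add]
  congr 1
  omega

lemma card_pairs_base_symplForm_eq_one (hn : 0 < n) :
    Nat.card {p : (Fin n ⊕ Fin n → ZMod 2) × (Fin n ⊕ Fin n → ZMod 2) |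
      p.1 ∈ base n hn ∧ p.1 ≠ 0 ∧ symplForm n p.2 p.1 = 1} =
      (2 ^ (n - 1) - 1) * 2 ^ (2 * n - 1) := by
  have hbase : Nat.card {v // v ∈ base n hn ∧ v ≠ 0} = 2 ^ (n - 1) - 1 := by
    have h0 : (0 : Fin n ⊕ Fin n → ZMod 2) ∈ base n hn := ⟨fun _ => rfl, rfl⟩
    change Nat.card ↥(base n hn \ {0}) = _
    rw [Nat.card_coe_set_eq, Set.ncard_sdiff_singleton_of_mem h0, ← Nat.card_coe_set_eq,
      card_base]
  have hpairs := Nat.card_subtype_prod_eq_mul (P := fun v => v ∈ base n hn ∧ v ≠ 0)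
    (Q := fun v w => symplForm n w v = 1) fun v hv => card_symplForm_eq_one hv.2
  rw [hbase] at hpairs
  exact (Nat.card_congr (Equiv.subtypeEquivRight fun p => and_assoc.symm)).trans hpairs

def IsDistillation (hn : 0 < n) (M : Matrix (Fin n ⊕ Fin n) (Fin n ⊕ Fin n) (ZMod 2)) : Prop :=
  Mᵀ * Omega n * M = Omega n ∧ M.mulVec '' base n hn = base n hn

lemma mem_pairOrbit_iff (hn : 1 < n) (p : (Fin n ⊕ Fin n → ZMod 2) × (Fin n ⊕ Fin n → ZMod 2)) :
    p ∈ pairOrbit n hn ↔ ∃ M, IsDistillation (by omega) M ∧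
      M *ᵥ Pi.single (Sum.inr ⟨n - 1, by omega⟩) 1 = p.1 ∧
      M *ᵥ Pi.single (Sum.inl ⟨n - 1, by omega⟩) 1 = p.2 := by
  simp only [pairOrbit, IsDistillation, and_assoc]
  rfl

namespace IsDistillation

variable {hn : 0 < n} {M N : Matrix (Fin n ⊕ Fin n) (Fin n ⊕ Fin n) (ZMod 2)}

lemma mul (hM : IsDistillation hn M) (hN : IsDistillation hn N) : IsDistillation hn (M * N) := by
  refine ⟨?_, ?_⟩
  · rw [transpose_mul, show Nᵀ * Mᵀ * Omega n * (M * N) = Nᵀ * (Mᵀ * Omega n * M) * N by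
      simp only [Matrix.mul_assoc], hM.1, hN.1]
  · have hcomp : (M * N).mulVec = M.mulVec ∘ N.mulVec := funext fun v => (mulVec_mulVec v M N).symm
    rw [hcomp, Set.image_comp, hN.2, hM.2]

lemma mulVec_single_inr_mem_base (hM : IsDistillation hn M) {m : Fin n} (hm : m ≠ ⟨0, hn⟩) :
    M *ᵥ Pi.single (Sum.inr m) 1 ∈ base n hn := by
  rw [← hM.2]
  exact Set.mem_image_of_mem _ ⟨fun i => by simp, by simp [Pi.single_eq_of_ne, Ne.symm hm]⟩

lemma symplForm_mulVec_single (hM : IsDistillation hn M) (m : Fin n) :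
    symplForm n (M *ᵥ Pi.single (Sum.inl m) 1) (M *ᵥ Pi.single (Sum.inr m) 1) = 1 := by
  rw [symplForm_mulVec_mulVec hM.1, symplForm_single_inr, Pi.single_eq_same]

end IsDistillation

lemma isDistillation_fromBlocks (hn : 0 < n) {A C D : Matrix (Fin n) (Fin n) (ZMod 2)}
    (hAD : Aᵀ * D = 1) (hCA : Cᵀ * A + Aᵀ * C = 0)
    (hD : ∀ x, (D *ᵥ x) ⟨0, hn⟩ = x ⟨0, hn⟩) : IsDistillation hn (fromBlocks A 0 C D) := by
  have hDA : Dᵀ * A = 1 := by simpa using congrArg transpose hAD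
  refine ⟨?_, ?_⟩
  · simp [Omega, fromBlocks_transpose, fromBlocks_multiply, hAD, hDA, hCA]
  · have hcomp : (fromBlocks A 0 C D).mulVec ∘ Sum.elim 0 =
        Sum.elim (0 : Fin n → ZMod 2) ∘ D.mulVec :=
      funext fromBlocks_mulVec_sumElim_zero_left
    have hpre : D.mulVec ⁻¹' {y : Fin n → ZMod 2 | y ⟨0, hn⟩ = 0} = {y | y ⟨0, hn⟩ = 0} := by
      ext y
      simp [hD]
    have hsurj : Function.Surjective D.mulVec :=
      mulVec_surjective_iff_isUnit.mpr (IsUnit.of_mul_eq_one_right _ hAD)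
    rw [base_eq_image, ← Set.image_comp, hcomp, Set.image_comp, ← hpre,
      Set.image_preimage_eq _ hsurj, hpre]

lemma isDistillation_transvection (hn : 0 < n) {a b : Fin n → ZMod 2} (hba : b ⬝ᵥ a = 0)
    (ha : a ⟨0, hn⟩ = 0) :
    IsDistillation hn (fromBlocks (1 - vecMulVec b a) 0 0 (1 + vecMulVec a b)) := by
  refine isDistillation_fromBlocks hn ?_ (by simp)
    fun x => by simp [one_add_vecMulVec_mulVec, ha]
  rw [transpose_sub, transpose_one, transpose_vecMulVec, sub_mul, mul_add, mul_add,
    vecMulVec_mul_vecMulVec, hba]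
  simp

lemma isDistillation_shear (hn : 0 < n) {S : Matrix (Fin n) (Fin n) (ZMod 2)} (hS : S.IsSymm) :
    IsDistillation hn (fromBlocks 1 0 S 1) :=
  isDistillation_fromBlocks hn (by simp)
    (by ext i j; simp [hS.apply i j, CharTwo.add_self_eq_zero]) (by simp)

lemma exists_isDistillation_mulVec_single_inr_eq (hn : 0 < n) {m : Fin n} (hm : m ≠ ⟨0, hn⟩)
    {v : Fin n ⊕ Fin n → ZMod 2} (hv : v ∈ base n hn) (hv0 : v ≠ 0) :
    ∃ M, IsDistillation hn M ∧ M *ᵥ Pi.single (Sum.inr m) 1 = v := by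
  rw [base_eq_image] at hv
  obtain ⟨y, hy, rfl⟩ := hv
  obtain ⟨u, hum, huy⟩ := exists_dotProduct_eq_one (y := y) (by rintro rfl; simp at hv0) m
  set e : Fin n → ZMod 2 := Pi.single m 1
  have hue : u ⬝ᵥ e = 1 := by simp [e, hum]
  refine ⟨fromBlocks (1 - vecMulVec u (y - e)) 0 0 (1 + vecMulVec (y - e) u),
    isDistillation_transvection hn (by rw [dotProduct_sub, huy, hue, sub_self])
      (by simpa [e, Pi.single_eq_of_ne (Ne.symm hm)] using hy), ?_⟩
  rw [← Sum.elim_zero_single, fromBlocks_mulVec_sumElim_zero_left, one_add_vecMulVec_mulVec, hue,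
    one_smul, add_sub_cancel]

lemma exists_isDistillation_fixing_single_inr (hn : 0 < n) {m : Fin n} (hm : m ≠ ⟨0, hn⟩)
    {w : Fin n ⊕ Fin n → ZMod 2} (hw : w (Sum.inl m) = 1) :
    ∃ M, IsDistillation hn M ∧ M *ᵥ Pi.single (Sum.inr m) 1 = Pi.single (Sum.inr m) 1 ∧
      M *ᵥ Pi.single (Sum.inl m) 1 = w := by
  set e : Fin n → ZMod 2 := Pi.single m 1
  set b := e - w ∘ Sum.inl
  have hbe : b ⬝ᵥ e = 0 := by simp [b, e, hw]
  obtain ⟨S, hS, hSw⟩ := exists_isSymm_mulVec_eq (x := w ∘ Sum.inl) hw (w ∘ Sum.inr)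
  refine ⟨fromBlocks 1 0 S 1 * fromBlocks (1 - vecMulVec b e) 0 0 (1 + vecMulVec e b),
    (isDistillation_shear hn hS).mul
      (isDistillation_transvection hn hbe (Pi.single_eq_of_ne (Ne.symm hm) _)), ?_, ?_⟩
  · rw [← Sum.elim_zero_single, ← mulVec_mulVec, fromBlocks_mulVec_sumElim_zero_left,
      fromBlocks_mulVec_sumElim_zero_left, one_add_vecMulVec_mulVec, hbe, zero_smul, add_zero,
      one_mulVec]
  · rw [← Sum.elim_single_zero, ← mulVec_mulVec, fromBlocks_mulVec_sumElim_zero_right,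
      zero_mulVec, fromBlocks_mulVec_sumElim_zero_right, one_sub_vecMulVec_mulVec, one_mulVec]
    have he : e ⬝ᵥ e = 1 := by simp [e]
    rw [he, one_smul, sub_sub_cancel, hSw, Sum.elim_comp_inl_inr]

lemma exists_isDistillation_of_symplForm_eq_one (hn : 0 < n) {m : Fin n} (hm : m ≠ ⟨0, hn⟩)
    {v w : Fin n ⊕ Fin n → ZMod 2} (hv : v ∈ base n hn) (hv0 : v ≠ 0)
    (hw : symplForm n w v = 1) :
    ∃ M, IsDistillation hn M ∧ M *ᵥ Pi.single (Sum.inr m) 1 = v ∧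
      M *ᵥ Pi.single (Sum.inl m) 1 = w := by
  obtain ⟨M₂, hM₂, hM₂v⟩ := exists_isDistillation_mulVec_single_inr_eq hn hm hv hv0
  obtain ⟨w', rfl⟩ := mulVec_surjective_of_transpose_mul_Omega_mul hM₂.1 w
  have hw' : w' (Sum.inl m) = 1 := by
    rw [← symplForm_single_inr w' m, ← symplForm_mulVec_mulVec hM₂.1, hM₂v, hw]
  obtain ⟨M₁, hM₁, hM₁v, hM₁w⟩ := exists_isDistillation_fixing_single_inr hn hm hw'
  exact ⟨M₂ * M₁, hM₂.mul hM₁, by rw [← mulVec_mulVec, hM₁v, hM₂v],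
    by rw [← mulVec_mulVec, hM₁w]⟩

end Distillation

theorem pair_orbit_of_distillation_subgroup (n : ℕ) (hn : 1 < n) :
    pairOrbit n hn =
      {p | p.1 ∈ base n (by omega) ∧ p.1 ≠ 0 ∧ symplForm n p.2 p.1 = 1} ∧
    Nat.card (pairOrbit n hn) = (2 ^ (n - 1) - 1) * 2 ^ (2 * n - 1) := by
  have hm : (⟨n - 1, by omega⟩ : Fin n) ≠ ⟨0, by omega⟩ := by
    simp only [ne_eq, Fin.mk.injEq]
    omega
  have horbit : pairOrbit n hn =
      {p | p.1 ∈ base n (by omega) ∧ p.1 ≠ 0 ∧ symplForm n p.2 p.1 = 1} := by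
    ext ⟨v, w⟩
    rw [mem_pairOrbit_iff]
    constructor
    · rintro ⟨M, hM, rfl, rfl⟩
      have hω := hM.symplForm_mulVec_single ⟨n - 1, by omega⟩
      refine ⟨hM.mulVec_single_inr_mem_base hm, fun h0 => ?_, hω⟩
      dsimp only at h0
      simp [h0, symplForm] at hω
    · rintro ⟨hv, hv0, hw⟩
      exact exists_isDistillation_of_symplForm_eq_one _ hm hv hv0 hw
  exact ⟨horbit, horbit ▸ card_pairs_base_symplForm_eq_one _⟩
end
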